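/- There exist only finitely many diagrams of initial exponents Δ ⊆ ℕ^k (subsets closed under addition of ℕ^k, equivalently monomial ideals) having a given Hilbert-Samuel function H(Δ)(s) = #{α ∉ Δ : |α| ≤ s}. -/

import Mathlib

/-! Identify a set `Δ ⊆ ℕ^k` with its indicator in the compact Cantor space `ℕ^k → Bool`. The
diagrams with Hilbert–Samuel function `H` form a closed subset, since both conditions are checked on
finitely many exponents at a time. Each of them is isolated: by Dickson's lemma a diagram `Δ` has
finitely many minimal elements, any other diagram containing them contains `Δ`, and two nested sets
with the same Hilbert–Samuel function coincide. A compact discrete set is finite. -/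

open Topology

/-- `Δ ⊆ ℕ^k` is a diagram of initial exponents if `Δ + ℕ^k ⊆ Δ`. -/
def IsDiagram {k : ℕ} (Δ : Set (Fin k → ℕ)) : Prop :=
  ∀ α ∈ Δ, ∀ β : Fin k → ℕ, α + β ∈ Δ

/-- The hypotheses say that `S` is closed and discrete in the product topology on
`Set α ≃ (α → Bool)`. -/
theorem Set.finite_of_forall_finite_agree {α : Type*} {S : Set (Set α)}
    (closed : ∀ Δ : Set α, (∀ F : Set α, F.Finite → ∃ Δ' ∈ S, ∀ a ∈ F, a ∈ Δ' ↔ a ∈ Δ) → Δ ∈ S)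
    (isolated : ∀ Δ ∈ S, ∃ F : Set α, F.Finite ∧ ∀ Δ' ∈ S, (∀ a ∈ F, a ∈ Δ' ↔ a ∈ Δ) → Δ' = Δ) :
    S.Finite := by
  classical
  let χ : Set α → α → Bool := fun Δ a => decide (a ∈ Δ)
  have χ_injective : χ.Injective := fun Δ Δ' h => by
    ext a
    simpa [χ] using congrFun h a
  by_contra hS
  obtain ⟨x, hx⟩ := (Set.Infinite.image χ_injective.injOn hS).exists_accPt_principal
  have nearby : ∀ F : Set α, F.Finite →
      ∃ Δ' ∈ S, χ Δ' ≠ x ∧ ∀ a ∈ F, a ∈ Δ' ↔ a ∈ {a | x a} := by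
    intro F hF
    have hU : F.pi (fun a => {x a}) ∈ 𝓝 x :=
      (isOpen_set_pi hF fun a _ => isOpen_discrete _).mem_nhds fun a _ => rfl
    obtain ⟨_, ⟨hagree, Δ', hΔ', rfl⟩, hne⟩ := accPt_iff_nhds.mp hx _ hU
    refine ⟨Δ', hΔ', hne, fun a ha => ?_⟩
    have hχa : χ Δ' a = x a := hagree a ha
    simp [χ, ← hχa]
  have hlim : {a | x a} ∈ S := closed _ fun F hF =>
    let ⟨Δ', hΔ', _, hagree⟩ := nearby F hF
    ⟨Δ', hΔ', hagree⟩
  obtain ⟨F, hF, hiso⟩ := isolated _ hlim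
  obtain ⟨Δ', hΔ', hne, hagree⟩ := nearby F hF
  apply hne
  rw [hiso Δ' hΔ' hagree]
  funext a
  simp [χ]

section HilbertSamuel

variable {ι : Type*} [Fintype ι]

theorem finite_setOf_sum_le (s : ℕ) : {α : ι → ℕ | ∑ t, α t ≤ s}.Finite :=
  (Set.Finite.pi fun _ => Set.finite_Iic s).subset fun α hα i _ =>
    (Finset.single_le_sum (fun j _ => Nat.zero_le (α j)) (Finset.mem_univ i)).trans hα

noncomputable def hilbertSamuel (Δ : Set (ι → ℕ)) (s : ℕ) : ℕ :=
  {α : ι → ℕ | α ∉ Δ ∧ ∑ t, α t ≤ s}.ncard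

theorem hilbertSamuel_congr {Δ Δ' : Set (ι → ℕ)} {s : ℕ}
    (h : ∀ α ∈ {α : ι → ℕ | ∑ t, α t ≤ s}, α ∈ Δ' ↔ α ∈ Δ) :
    hilbertSamuel Δ' s = hilbertSamuel Δ s := by
  unfold hilbertSamuel
  congr 1
  ext α
  simp only [Set.mem_ofPred_eq]
  exact and_congr_left fun hα => not_congr (h α hα)

theorem eq_of_subset_of_hilbertSamuel_eq {Δ Δ' : Set (ι → ℕ)} (hsub : Δ ⊆ Δ')
    (hH : ∀ s, hilbertSamuel Δ' s = hilbertSamuel Δ s) : Δ' = Δ := by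
  refine (Set.Subset.antisymm hsub fun α hα' => ?_).symm
  by_contra hα
  have hcompl : {γ : ι → ℕ | γ ∉ Δ' ∧ ∑ t, γ t ≤ ∑ t, α t} =
      {γ | γ ∉ Δ ∧ ∑ t, γ t ≤ ∑ t, α t} :=
    Set.eq_of_subset_of_ncard_le (fun γ hγ => ⟨fun h => hγ.1 (hsub h), hγ.2⟩) (hH _).ge
      ((finite_setOf_sum_le _).subset fun γ hγ => hγ.2)
  have : α ∈ {γ : ι → ℕ | γ ∉ Δ' ∧ ∑ t, γ t ≤ ∑ t, α t} := hcompl ▸ ⟨hα, le_rfl⟩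
  exact this.1 hα'

end HilbertSamuel

theorem IsDiagram.subset_of_minimal_subset {k : ℕ} {Δ Δ' : Set (Fin k → ℕ)}
    (hΔ' : IsDiagram Δ') (h : {α | Minimal (· ∈ Δ) α} ⊆ Δ') : Δ ⊆ Δ' := by
  intro α hα
  obtain ⟨g, hgα, hg⟩ := exists_minimal_le_of_wellFoundedLT (· ∈ Δ) α hα
  obtain ⟨β, rfl⟩ := exists_add_of_le hgα
  exact hΔ' g (h hg) β

section DiagramsWithHilbertSamuel

variable {k : ℕ} {H : ℕ → ℕ}

def diagramsWithHilbertSamuel (k : ℕ) (H : ℕ → ℕ) : Set (Set (Fin k → ℕ)) :=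
  {Δ | IsDiagram Δ ∧ ∀ s, hilbertSamuel Δ s = H s}

theorem mem_diagramsWithHilbertSamuel_of_forall_finite_agree {Δ : Set (Fin k → ℕ)}
    (h : ∀ F : Set (Fin k → ℕ), F.Finite →
      ∃ Δ' ∈ diagramsWithHilbertSamuel k H, ∀ a ∈ F, a ∈ Δ' ↔ a ∈ Δ) :
    Δ ∈ diagramsWithHilbertSamuel k H := by
  refine ⟨fun α hα β => ?_, fun s => ?_⟩
  · obtain ⟨Δ', ⟨hΔ', -⟩, hagree⟩ := h {α, α + β} (Set.toFinite _)
    exact (hagree _ (by simp)).mp (hΔ' α ((hagree α (by simp)).mpr hα) β)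
  · obtain ⟨Δ', ⟨-, hH'⟩, hagree⟩ := h _ (finite_setOf_sum_le s)
    rw [← hilbertSamuel_congr hagree, hH']

theorem eq_of_minimal_subset_of_mem_diagramsWithHilbertSamuel {Δ Δ' : Set (Fin k → ℕ)}
    (hΔ : Δ ∈ diagramsWithHilbertSamuel k H) (hΔ' : Δ' ∈ diagramsWithHilbertSamuel k H)
    (h : {α | Minimal (· ∈ Δ) α} ⊆ Δ') : Δ' = Δ :=
  eq_of_subset_of_hilbertSamuel_eq (hΔ'.1.subset_of_minimal_subset h) fun s => by
    rw [hΔ.2, hΔ'.2]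

end DiagramsWithHilbertSamuel

/-- There exist only finitely many diagrams of initial exponents `Δ ⊆ ℕ^k`
with a given Hilbert–Samuel function `H(Δ)(s) = #{α ∉ Δ : |α| ≤ s}`. -/
theorem finitely_many_diagrams_with_hilbert_samuel {k : ℕ} (H : ℕ → ℕ) :
    {Δ : Set (Fin k → ℕ) | IsDiagram Δ ∧
      ∀ s : ℕ, {α : Fin k → ℕ | α ∉ Δ ∧ ∑ t, α t ≤ s}.ncard = H s}.Finite := by
  change (diagramsWithHilbertSamuel k H).Finite
  refine Set.finite_of_forall_finite_agree
    (fun _ => mem_diagramsWithHilbertSamuel_of_forall_finite_agree) fun Δ hΔ => ?_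
  have dickson : {α | Minimal (· ∈ Δ) α}.Finite :=
    WellQuasiOrderedLE.finite_of_isAntichain (setOfPred_minimal_antichain _)
  exact ⟨_, dickson, fun Δ' hΔ' hagree =>
    eq_of_minimal_subset_of_mem_diagramsWithHilbertSamuel hΔ hΔ' fun α hα =>
      (hagree α hα).mpr hα.1⟩
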